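/- Let 1 ≤ i ≤ n and 0 ≤ j < i. Let D_v be the block of ℬ_i containing v, let α ∈ R_L, and set D = α(D_v). Suppose some element of G_v does not fix setwise some block of ℬ_j contained in D. Then for every 1 ≤ k ≤ p−1, some element of G_v does not fix setwise some block of ℬ_j contained in α^k(D_v). -/

import Mathlib

/-!
Say that `G_v` fixes the blocks in `D` if it fixes setwise every block of `ℬ_j` contained in `D`.
For translates of `D_v` this is closed under adding translation vectors. Suppose it holds for
`a + D_v` and `b + D_v`, and let `g ∈ G_v`, `x = a + v`. Then `g` fixes the block `F_x ∋ x`, which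
lies in `a + D_v`, so the translation by `κ = g x - x` fixes `F_x`, hence every block of `ℬ_j`;
and `τ_{-κ} g ∈ G_x = τ_a G_v τ_a⁻¹` fixes the blocks in `a + b + D_v`, hence so does
`g = τ_κ (τ_{-κ} g)`. As `α^k(D_v) = k r + D_v`, the property for `α^k(D_v)` would propagate to
`(m k) r + D_v` for all `m ≥ 1`, and `m k ≡ 1 (mod p)` gives `α(D_v)`, contrary to hypothesis.
-/

abbrev Pt (p n : ℕ) := Fin n → ZMod p

/-- The left regular representation `R_L` of `(ℤ/pℤ)^n` inside `Sym(R)`: all translations. -/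
def RL (p n : ℕ) : Subgroup (Equiv.Perm (Pt p n)) where
  carrier := {σ | ∃ r : Pt p n, ∀ x, σ x = r + x}
  one_mem' := ⟨0, fun x => by simp⟩
  mul_mem' := by
    rintro a b ⟨r, hr⟩ ⟨s, hs⟩
    refine ⟨r + s, fun x => ?_⟩
    simp [Equiv.Perm.mul_apply, hr, hs, add_assoc]
  inv_mem' := by
    rintro a ⟨r, hr⟩
    refine ⟨-r, fun x => ?_⟩
    have h := hr (a⁻¹ x)
    rw [show a (a⁻¹ x) = x from (Equiv.eq_symm_apply a).mp rfl] at h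
    have h2 : -r + x = a⁻¹ x := by
      conv_lhs => rw [h]
      abel
    exact h2.symm

/-- The conjugate `π⁻¹ R_L π` of the left regular representation. -/
def RLpi (p n : ℕ) (π : Equiv.Perm (Pt p n)) : Subgroup (Equiv.Perm (Pt p n)) where
  carrier := {σ | ∃ ρ ∈ RL p n, σ = π⁻¹ * ρ * π}
  one_mem' := ⟨1, one_mem _, by group⟩
  mul_mem' := by
    rintro a b ⟨r, hr, rfl⟩ ⟨s, hs, rfl⟩
    exact ⟨r * s, mul_mem hr hs, by group⟩
  inv_mem' := by
    rintro a ⟨r, hr, rfl⟩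
    exact ⟨r⁻¹, inv_mem hr, by group⟩

/-- `σ` belongs to the 2-closure `G^{(2)}` of `G`. -/
def twoClosed {α : Type*} (G : Subgroup (Equiv.Perm α)) (σ : Equiv.Perm α) : Prop :=
  ∀ x y : α, ∃ g ∈ G, σ x = g x ∧ σ y = g y

open Pointwise

section Blocks

variable {X : Type*}

def FixesBlocksIn (G : Subgroup (Equiv.Perm X)) (B : Set (Set X)) (v : X) (D : Set X) : Prop :=
  ∀ F ∈ B, F ⊆ D → ∀ g ∈ G, g v = v → ⇑g '' F = F

theorem FixesBlocksIn.image {G : Subgroup (Equiv.Perm X)} {B : Set (Set X)} {v : X} {D : Set X}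
    (hB : ∀ g ∈ G, ∀ b ∈ B, ⇑g '' b ∈ B) {σ : Equiv.Perm X} (hσ : σ ∈ G)
    (h : FixesBlocksIn G B v D) : FixesBlocksIn G B (σ v) (⇑σ '' D) := by
  intro F hF hFD g hg hgv
  have hconj : ⇑(σ⁻¹ * g * σ) '' (⇑σ⁻¹ '' F) = ⇑σ⁻¹ '' F :=
    h _ (hB _ (inv_mem hσ) F hF) ((σ.symm_image_subset D F).2 hFD) _
      (mul_mem (mul_mem (inv_mem hσ) hg) hσ) (by simp [hgv])
  simp only [Equiv.Perm.coe_mul, Equiv.Perm.coe_inv, Set.image_comp, Equiv.image_symm_image]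
    at hconj
  exact Set.image_injective.2 σ.symm.injective hconj

theorem subset_of_mem_of_refines {B B' : Set (Set X)} (hB' : Setoid.IsPartition B')
    (href : ∀ F ∈ B, ∃ D ∈ B', F ⊆ D) {F D : Set X} (hF : F ∈ B) (hD : D ∈ B') {x : X}
    (hxF : x ∈ F) (hxD : x ∈ D) : F ⊆ D := by
  obtain ⟨D', hD', hFD'⟩ := href F hF
  rwa [Setoid.eq_of_mem_eqv_class hB'.2 hD' (hFD' hxF) hD hxD] at hFD'

theorem exists_superset_of_le {B : ℕ → Set (Set X)} {n : ℕ}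
    (hB : ∀ i < n, ∀ b ∈ B i, ∃ c ∈ B (i + 1), b ⊆ c) {i j : ℕ} (hji : j ≤ i) (hin : i ≤ n) :
    ∀ b ∈ B j, ∃ c ∈ B i, b ⊆ c := by
  induction i, hji using Nat.le_induction with
  | base => exact fun b hb => ⟨b, hb, subset_rfl⟩
  | succ i hji ih =>
    intro b hb
    obtain ⟨c, hc, hbc⟩ := ih (by omega) b hb
    obtain ⟨d, hd, hcd⟩ := hB i (by omega) c hc
    exact ⟨d, hd, hbc.trans hcd⟩

end Blocks

section Translations

variable {A : Type*} [AddCommGroup A]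

theorem image_addLeft (c : A) (D : Set A) : ⇑(Equiv.addLeft c) '' D = c +ᵥ D :=
  Set.image_vadd (a := c) (t := D)

theorem sub_vadd_eq_self {B : Set (Set A)} (hB : Setoid.IsPartition B)
    (hBT : ∀ c : A, ∀ b ∈ B, c +ᵥ b ∈ B) {F : Set A} (hF : F ∈ B) {x y : A} (hx : x ∈ F)
    (hy : y ∈ F) : (y - x) +ᵥ F = F :=
  Setoid.eq_of_mem_eqv_class hB.2 (hBT _ F hF) ⟨x, hx, sub_add_cancel y x⟩ hF hy

theorem vadd_eq_self_of_vadd_eq_self {B : Set (Set A)} (hB : Setoid.IsPartition B)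
    (hBT : ∀ c : A, ∀ b ∈ B, c +ᵥ b ∈ B) {F₁ F₂ : Set A} (hF₁ : F₁ ∈ B) (hF₂ : F₂ ∈ B)
    {κ : A} (hκ : κ +ᵥ F₁ = F₁) : κ +ᵥ F₂ = F₂ := by
  obtain ⟨x, hx⟩ := Setoid.nonempty_of_mem_partition hB hF₁
  obtain ⟨y, hy⟩ := Setoid.nonempty_of_mem_partition hB hF₂
  have hF₁₂ : (y - x) +ᵥ F₁ = F₂ :=
    Setoid.eq_of_mem_eqv_class hB.2 (hBT _ F₁ hF₁) ⟨x, hx, sub_add_cancel y x⟩ hF₂ hy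
  rw [← hF₁₂, vadd_comm, hκ]

theorem FixesBlocksIn.add_vadd {G : Subgroup (Equiv.Perm A)} (hT : ∀ c : A, Equiv.addLeft c ∈ G)
    {B B' : Set (Set A)} (hB : Setoid.IsPartition B) (hBG : ∀ g ∈ G, ∀ b ∈ B, ⇑g '' b ∈ B)
    (hB' : Setoid.IsPartition B') (hB'G : ∀ g ∈ G, ∀ b ∈ B', ⇑g '' b ∈ B')
    (href : ∀ F ∈ B, ∃ D ∈ B', F ⊆ D) {Dv : Set A} (hDv : Dv ∈ B') {v : A} (hv : v ∈ Dv)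
    {a b : A} (ha : FixesBlocksIn G B v (a +ᵥ Dv)) (hb : FixesBlocksIn G B v (b +ᵥ Dv)) :
    FixesBlocksIn G B v ((a + b) +ᵥ Dv) := by
  have hBT : ∀ c : A, ∀ F ∈ B, c +ᵥ F ∈ B := fun c F hF => image_addLeft c F ▸ hBG _ (hT c) F hF
  intro F hF hFD g hg hgv
  set x := a + v
  obtain ⟨Fx, ⟨hFx, hxFx⟩, -⟩ := hB.2 x
  have hgFx : ⇑g '' Fx = Fx :=
    ha Fx hFx (subset_of_mem_of_refines hB' href hFx (image_addLeft a Dv ▸ hB'G _ (hT a) Dv hDv)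
      hxFx (Set.vadd_mem_vadd_set hv)) g hg hgv
  set κ := g x - x
  have hκF : κ +ᵥ F = F := vadd_eq_self_of_vadd_eq_self hB hBT hFx hF
    (sub_vadd_eq_self hB hBT hFx hxFx (hgFx ▸ Set.mem_image_of_mem g hxFx))
  have hhF : ⇑(Equiv.addLeft (-κ) * g) '' F = F := by
    have hbx : FixesBlocksIn G B x ((a + b) +ᵥ Dv) := by
      rw [AddSemigroupAction.add_vadd]
      exact hb.image hBG (hT a)
    exact hbx F hF hFD _ (mul_mem (hT _) hg) (by simp [κ])
  calc ⇑g '' F = κ +ᵥ ⇑(Equiv.addLeft (-κ) * g) '' F := by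
        rw [← image_addLeft, ← Set.image_comp]; congr 1; ext y; simp
    _ = F := by rw [hhF, hκF]

theorem FixesBlocksIn.nsmul_vadd {G : Subgroup (Equiv.Perm A)} (hT : ∀ c : A, Equiv.addLeft c ∈ G)
    {B B' : Set (Set A)} (hB : Setoid.IsPartition B) (hBG : ∀ g ∈ G, ∀ b ∈ B, ⇑g '' b ∈ B)
    (hB' : Setoid.IsPartition B') (hB'G : ∀ g ∈ G, ∀ b ∈ B', ⇑g '' b ∈ B')
    (href : ∀ F ∈ B, ∃ D ∈ B', F ⊆ D) {Dv : Set A} (hDv : Dv ∈ B') {v : A} (hv : v ∈ Dv)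
    {c : A} (hc : FixesBlocksIn G B v (c +ᵥ Dv)) {m : ℕ} (hm : m ≠ 0) :
    FixesBlocksIn G B v ((m • c) +ᵥ Dv) := by
  induction m, Nat.one_le_iff_ne_zero.2 hm using Nat.le_induction with
  | base => simpa only [one_nsmul] using hc
  | succ m _ ih =>
    rw [succ_nsmul]
    exact (ih (by omega)).add_vadd hT hB hBG hB' hB'G href hDv hv hc

end Translations

theorem exists_nsmul_nsmul_eq_self {p : ℕ} [Fact p.Prime] {M : Type*} [AddCommGroup M]
    [Module (ZMod p) M] {k : ℕ} (hk : (k : ZMod p) ≠ 0) (x : M) : ∃ m ≠ 0, m • k • x = x := by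
  refine ⟨((k : ZMod p)⁻¹).val, ?_, ?_⟩
  · rw [Ne, ZMod.val_eq_zero]
    exact inv_ne_zero hk
  · rw [← Nat.cast_smul_eq_nsmul (ZMod p) k, ← Nat.cast_smul_eq_nsmul (ZMod p), smul_smul,
      ZMod.natCast_zmod_val, inv_mul_cancel₀ hk, one_smul]

theorem stmt_12_general (p n : ℕ) (hp : p.Prime)
    (π : Equiv.Perm (Pt p n))
    (G : Subgroup (Equiv.Perm (Pt p n))) (hG : G = RL p n ⊔ RLpi p n π)
    (B : ℕ → Set (Set (Pt p n)))
    (hBpart : ∀ i ≤ n, Setoid.IsPartition (B i))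
    (hBinv : ∀ i ≤ n, ∀ g ∈ G, ∀ b ∈ B i, ⇑g '' b ∈ B i)
    (hBref : ∀ i < n, ∀ b ∈ B i, ∃ c ∈ B (i + 1), b ⊆ c)
    (v : Pt p n)
    (i j : ℕ) (hin : i ≤ n) (hj : j < i)
    (Dv : Set (Pt p n)) (hDv : Dv ∈ B i) (hvDv : v ∈ Dv)
    (α : Equiv.Perm (Pt p n)) (hα : α ∈ RL p n)
    (hmove : ∃ F ∈ B j, F ⊆ ⇑α '' Dv ∧ ∃ g ∈ G, g v = v ∧ ⇑g '' F ≠ F) :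
    ∀ k : ℕ, 1 ≤ k → k ≤ p - 1 →
      ∃ F ∈ B j, F ⊆ ⇑(α ^ k) '' Dv ∧ ∃ g ∈ G, g v = v ∧ ⇑g '' F ≠ F := by
  intro k hk1 hkp
  have := Fact.mk hp
  obtain ⟨r, hr⟩ := hα
  obtain rfl : α = Equiv.addLeft r := Equiv.ext hr
  have hT : ∀ c, Equiv.addLeft c ∈ G := fun c => hG ▸ Subgroup.mem_sup_left ⟨c, fun _ => rfl⟩
  have hk : (k : ZMod p) ≠ 0 := by
    rw [Ne, ZMod.natCast_eq_zero_iff]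
    exact Nat.not_dvd_of_pos_of_lt hk1 (by omega)
  obtain ⟨m, hm, hmk⟩ := exists_nsmul_nsmul_eq_self hk r
  by_contra! hfix
  have hk_fix : FixesBlocksIn G (B j) v ((k • r) +ᵥ Dv) := by
    rw [← image_addLeft, ← Equiv.nsmul_addLeft]
    exact hfix
  obtain ⟨F, hF, hFD, g, hg, hgv, hgF⟩ := hmove
  have h1_fix := hk_fix.nsmul_vadd hT (hBpart j (by omega)) (hBinv j (by omega)) (hBpart i hin)
    (hBinv i hin) (exists_superset_of_le hBref hj.le hin) hDv hvDv hm
  rw [hmk] at h1_fix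
  exact hgF (h1_fix F hF (image_addLeft r Dv ▸ hFD) g hg hgv)

/-- **Lemma 5.1.** Let `D_v ∈ ℬ_i` contain `v`, let `α ∈ R_L`, `D = α(D_v)`, and `j < i`.
If some element of `G_v` does not fix setwise some block of `ℬ_j` contained in `D`, then
for every `1 ≤ k ≤ p-1`, some element of `G_v` does not fix setwise some block of `ℬ_j`
contained in `α^k(D_v)`. -/
theorem stmt_12 (p n : ℕ) (hp : p.Prime) (hn : 1 ≤ n)
    (π : Equiv.Perm (Pt p n))
    (G : Subgroup (Equiv.Perm (Pt p n))) (hG : G = RL p n ⊔ RLpi p n π)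
    (hpG : IsPGroup p ↑G)
    (B : ℕ → Set (Set (Pt p n)))
    (hBpart : ∀ i ≤ n, Setoid.IsPartition (B i))
    (hBsize : ∀ i ≤ n, ∀ b ∈ B i, Nat.card b = p ^ i)
    (hBinv : ∀ i ≤ n, ∀ g ∈ G, ∀ b ∈ B i, ⇑g '' b ∈ B i)
    (hBref : ∀ i < n, ∀ b ∈ B i, ∃ c ∈ B (i + 1), b ⊆ c)
    (v : Pt p n)
    (i j : ℕ) (hi1 : 1 ≤ i) (hin : i ≤ n) (hj : j < i)
    (Dv : Set (Pt p n)) (hDv : Dv ∈ B i) (hvDv : v ∈ Dv)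
    (α : Equiv.Perm (Pt p n)) (hα : α ∈ RL p n)
    (hmove : ∃ F ∈ B j, F ⊆ ⇑α '' Dv ∧ ∃ g ∈ G, g v = v ∧ ⇑g '' F ≠ F) :
    ∀ k : ℕ, 1 ≤ k → k ≤ p - 1 →
      ∃ F ∈ B j, F ⊆ ⇑(α ^ k) '' Dv ∧ ∃ g ∈ G, g v = v ∧ ⇑g '' F ≠ F :=
  stmt_12_general p n hp π G hG B hBpart hBinv hBref v i j hin hj Dv hDv hvDv α hα hmove
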